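/- ₃F₂(1,1,4/3;2,5/3;1/2) = (1/2) · ₃F₂(1,1,7/6;2,5/3;1), where the series on the right converges because 2 + 5/3 − 1 − 1 − 7/6 = 1/2 > 0. -/

import Mathlib

/-!
Write `F = ₂F₁(1, 4/3; 5/3; ·)` and `G = ₂F₁(1, 7/6; 5/3; ·)`.
Since `(1)ₙ² / ((2)ₙ n!) = 1/(n+1)`, integrating term by term gives `LHS = 2 ∫₀^{1/2} F(z) dz`,
and the substitution `w = 4z(1-z)` (again term by term) gives
`∑ₖ (7/6)ₖ/((5/3)ₖ (k+1)) = 4 ∫₀^{1/2} (1-2z) G(4z(1-z)) dz`.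
The integrands agree by the quadratic transformation `F(z) = (1-2z) G(4z(1-z))` on `(0, 1/2)`.
To prove it, note that `₂F₁(1, b; c; ·)` satisfies a first-order linear equation, whose solution
gives `(x^(c-1) (1-x)^(b+1-c) ₂F₁(1, b; c; x))' = (c-1) x^(c-2) (1-x)^(b-c)`; the two weighted
sides then have the same derivative and both vanish at `0`. The right-hand series converges
because `((7/6)ₖ/(5/3)ₖ)² ≤ 1/(k+1)`.
-/

open scoped BigOperators

/-- Rising factorial (Pochhammer symbol) `(x)_k = x(x+1)⋯(x+k-1)`. -/
noncomputable def pochR (x : ℝ) (k : ℕ) : ℝ := ∏ i ∈ Finset.range k, (x + i)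

/-- The generalized hypergeometric series `₃F₂(a₁,a₂,a₃;b₁,b₂;z)`. -/
noncomputable def F32R (a₁ a₂ a₃ b₁ b₂ z : ℝ) : ℝ :=
  ∑' k : ℕ, pochR a₁ k * pochR a₂ k * pochR a₃ k /
      (pochR b₁ k * pochR b₂ k * (Nat.factorial k : ℝ)) * z ^ k

open Set MeasureTheory
open scoped Nat

lemma pochR_zero (x : ℝ) : pochR x 0 = 1 := by simp [pochR]

lemma pochR_succ (x : ℝ) (k : ℕ) : pochR x (k + 1) = pochR x k * (x + k) := by
  simp [pochR, Finset.prod_range_succ]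

lemma pochR_pos {x : ℝ} (hx : 0 < x) (k : ℕ) : 0 < pochR x k := by
  induction k with
  | zero => simp [pochR_zero]
  | succ k ih => rw [pochR_succ]; positivity

lemma pochR_one (k : ℕ) : pochR 1 k = k ! := by
  induction k with
  | zero => simp [pochR_zero]
  | succ k ih => rw [pochR_succ, ih, Nat.factorial_succ]; push_cast; ring

lemma pochR_two (k : ℕ) : pochR 2 k = (k + 1)! := by
  induction k with
  | zero => simp [pochR_zero]
  | succ k ih => rw [pochR_succ, ih, Nat.factorial_succ (k + 1)]; push_cast; ring

section PowerSeries

variable {a : ℕ → ℝ} {x : ℝ}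

lemma summable_mul_pow (ha : ∀ n, |a n| ≤ 1) (hx : |x| < 1) :
    Summable fun n ↦ a n * x ^ n := by
  refine .of_norm_bounded (summable_geometric_of_lt_one (abs_nonneg x) hx) fun n ↦ ?_
  rw [norm_mul, norm_pow, Real.norm_eq_abs, Real.norm_eq_abs]
  exact mul_le_of_le_one_left (by positivity) (ha n)

lemma summable_natCast_mul_mul_pow (ha : ∀ n, |a n| ≤ 1) (hx : |x| < 1) :
    Summable fun n : ℕ ↦ (n : ℝ) * a n * x ^ n := by
  have hgeom : Summable fun n : ℕ ↦ (n : ℝ) * |x| ^ n := by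
    simpa using summable_pow_mul_geometric_of_norm_lt_one 1 (by rwa [Real.norm_eq_abs, abs_abs])
  refine .of_norm_bounded hgeom fun n ↦ ?_
  rw [norm_mul, norm_mul, norm_pow, Real.norm_eq_abs, Real.norm_eq_abs, Real.norm_eq_abs,
    Nat.abs_cast, mul_assoc]
  exact mul_le_mul_of_nonneg_left (mul_le_of_le_one_left (by positivity) (ha n)) n.cast_nonneg

lemma summable_natCast_mul_pow_pred {r : ℝ} (hr : |r| < 1) :
    Summable fun n : ℕ ↦ (n : ℝ) * r ^ (n - 1) := by
  rw [← summable_nat_add_iff 1]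
  have h := (summable_natCast_mul_mul_pow (a := 1) (by simp) hr).add
    (summable_mul_pow (a := 1) (by simp) hr)
  refine h.congr fun n ↦ ?_
  simp only [Pi.one_apply, Nat.add_sub_cancel]
  push_cast
  ring

lemma hasDerivAt_tsum_mul_pow (ha : ∀ n, |a n| ≤ 1) (hx : |x| < 1) :
    HasDerivAt (fun y ↦ ∑' n, a n * y ^ n) (∑' n, a n * (n * x ^ (n - 1))) x := by
  obtain ⟨r, hxr, hr1⟩ := exists_between hx
  have hr : |r| < 1 := by rwa [abs_of_nonneg ((abs_nonneg x).trans hxr.le)]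
  refine hasDerivAt_tsum_of_isPreconnected (summable_natCast_mul_pow_pred hr) isOpen_Ioo
    isPreconnected_Ioo (fun n y _ ↦ (hasDerivAt_pow n y).const_mul (a n)) (fun n y hy ↦ ?_)
    (y₀ := 0) ⟨by linarith [abs_nonneg x], by linarith [abs_nonneg x]⟩
    (summable_mul_pow ha (by simp)) (abs_lt.mp hxr)
  have hyr : |y| ≤ r := abs_le.mpr ⟨hy.1.le, hy.2.le⟩
  rw [Real.norm_eq_abs, abs_mul, abs_mul, Nat.abs_cast, abs_pow]
  calc |a n| * (n * |y| ^ (n - 1)) ≤ n * |y| ^ (n - 1) :=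
        mul_le_of_le_one_left (by positivity) (ha n)
    _ ≤ n * r ^ (n - 1) := by gcongr

lemma tsum_mul_pow_ode {b c : ℝ} (ha : ∀ n, |a n| ≤ 1) (ha0 : a 0 = 1)
    (hrec : ∀ n : ℕ, a (n + 1) * (c + n) = a n * (b + n)) (hx : |x| < 1) :
    x * (1 - x) * (∑' n, a n * (n * x ^ (n - 1))) + (c - 1 - b * x) * ∑' n, a n * x ^ n
      = c - 1 := by
  set S := ∑' n, a n * x ^ n
  set D := ∑' n : ℕ, (n : ℝ) * a n * x ^ n
  have hS := (summable_mul_pow ha hx).hasSum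
  have hD := (summable_natCast_mul_mul_pow ha hx).hasSum
  have hxA' : x * ∑' n, a n * (n * x ^ (n - 1)) = D := by
    rw [← tsum_mul_left]
    congr 1 with (_ | n)
    · simp
    · rw [Nat.add_sub_cancel, pow_succ]; ring
  have hsum (k : ℝ) : HasSum (fun n : ℕ ↦ (n + k) * a n * x ^ n) (D + k * S) :=
    (hD.add (hS.mul_left k)).congr_fun fun n ↦ by ring
  have hshift : D + (c - 1) * S = (c - 1) + x * (D + b * S) := by
    rw [← (hsum (c - 1)).tsum_eq, (hsum (c - 1)).summable.tsum_eq_zero_add, ← (hsum b).tsum_eq,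
      ← tsum_mul_left]
    congr 1
    · simp [ha0]
    · congr 1 with n
      push_cast
      linear_combination x ^ (n + 1) * hrec n
  linear_combination (1 - x) * hxA' + hshift

end PowerSeries

-- `(1)ₙ / n! = 1`, so these are the coefficients of `₂F₁(1, b; c; x)`.
noncomputable def f21Coeff (b c : ℝ) (n : ℕ) : ℝ := pochR b n / pochR c n

noncomputable def f21 (b c x : ℝ) : ℝ := ∑' n, f21Coeff b c n * x ^ n

-- `x^(c-1) (1-x)^(b+1-c)` is the integrating factor of the first-order linear equation
-- satisfied by `₂F₁(1, b; c; x)`.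
noncomputable def f21Weighted (b c x : ℝ) : ℝ := x ^ (c - 1) * (1 - x) ^ (b + 1 - c) * f21 b c x

section F21

variable {b c x : ℝ}

lemma f21Coeff_zero (b c : ℝ) : f21Coeff b c 0 = 1 := by simp [f21Coeff, pochR_zero]

lemma F32R_summand_one_one_two (a c z : ℝ) (n : ℕ) :
    pochR 1 n * pochR 1 n * pochR a n / (pochR 2 n * pochR c n * (n ! : ℝ)) * z ^ n
      = f21Coeff a c n / (n + 1) * z ^ n := by
  have hfac : (n ! : ℝ) ≠ 0 := Nat.cast_ne_zero.mpr n.factorial_ne_zero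
  rw [f21Coeff, pochR_one, pochR_two, Nat.factorial_succ]
  push_cast
  field_simp

lemma F32R_one_one_two (a c z : ℝ) :
    F32R 1 1 a 2 c z = ∑' n : ℕ, f21Coeff a c n / (n + 1) * z ^ n :=
  tsum_congr (F32R_summand_one_one_two a c z)

lemma f21Coeff_pos (hb : 0 < b) (hc : 0 < c) (n : ℕ) : 0 < f21Coeff b c n :=
  div_pos (pochR_pos hb n) (pochR_pos hc n)

lemma f21Coeff_succ (hc : 0 < c) (n : ℕ) :
    f21Coeff b c (n + 1) * (c + n) = f21Coeff b c n * (b + n) := by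
  have hpoch := (pochR_pos hc n).ne'
  have hcn : c + n ≠ 0 := by positivity
  simp only [f21Coeff, pochR_succ]
  field_simp

lemma abs_f21Coeff_le_one (hb : 0 < b) (hbc : b ≤ c) (n : ℕ) : |f21Coeff b c n| ≤ 1 := by
  have hc : 0 < c := hb.trans_le hbc
  rw [abs_of_pos (f21Coeff_pos hb hc n)]
  induction n with
  | zero => rw [f21Coeff_zero]
  | succ n ih =>
    have hcn : 0 < c + n := by positivity
    have hrec := f21Coeff_succ (b := b) hc n
    have hpos := f21Coeff_pos hb hc n
    rw [← mul_le_mul_iff_left₀ hcn]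
    nlinarith

lemma hasDerivAt_f21 (hb : 0 < b) (hbc : b ≤ c) (hx : |x| < 1) :
    HasDerivAt (f21 b c) (∑' n, f21Coeff b c n * (n * x ^ (n - 1))) x :=
  hasDerivAt_tsum_mul_pow (abs_f21Coeff_le_one hb hbc) hx

lemma f21_ode (hb : 0 < b) (hbc : b ≤ c) (hx : |x| < 1) :
    x * (1 - x) * (∑' n, f21Coeff b c n * (n * x ^ (n - 1))) + (c - 1 - b * x) * f21 b c x
      = c - 1 :=
  tsum_mul_pow_ode (abs_f21Coeff_le_one hb hbc) (f21Coeff_zero b c)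
    (f21Coeff_succ (hb.trans_le hbc)) hx

lemma hasDerivAt_f21Weighted (hb : 0 < b) (hbc : b ≤ c) (hx : x ∈ Ioo 0 1) :
    HasDerivAt (f21Weighted b c) ((c - 1) * x ^ (c - 2) * (1 - x) ^ (b - c)) x := by
  obtain ⟨hx0, hx1⟩ := hx
  have hx1' : 0 < 1 - x := by linarith
  have habs : |x| < 1 := abs_lt.mpr ⟨by linarith, hx1⟩
  have hpow : HasDerivAt (fun y ↦ y ^ (c - 1)) ((c - 1) * x ^ (c - 2)) x :=
    ((hasDerivAt_id' x).rpow_const (Or.inl hx0.ne')).congr_deriv (by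
      rw [show c - 1 - 1 = c - 2 by ring]; ring)
  have hpow' :
      HasDerivAt (fun y ↦ (1 - y) ^ (b + 1 - c)) (-((b + 1 - c) * (1 - x) ^ (b - c))) x :=
    (((hasDerivAt_id' x).const_sub 1).rpow_const (Or.inl hx1'.ne')).congr_deriv (by
      rw [show b + 1 - c - 1 = b - c by ring]; ring)
  refine ((hpow.mul hpow').mul (hasDerivAt_f21 hb hbc habs)).congr_deriv ?_
  have e1 : x ^ (c - 1) = x * x ^ (c - 2) := by
    rw [show c - 1 = 1 + (c - 2) by ring, Real.rpow_add hx0, Real.rpow_one]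
  have e2 : (1 - x) ^ (b + 1 - c) = (1 - x) * (1 - x) ^ (b - c) := by
    rw [show b + 1 - c = 1 + (b - c) by ring, Real.rpow_add hx1', Real.rpow_one]
  simp only [Pi.mul_apply]
  rw [e1, e2]
  linear_combination x ^ (c - 2) * (1 - x) ^ (b - c) * f21_ode hb hbc habs

lemma continuousAt_f21Weighted (hb : 0 < b) (hbc : b ≤ c) (hc : 1 ≤ c) (hcb : c ≤ b + 1)
    (hx : |x| < 1) : ContinuousAt (f21Weighted b c) x :=
  (((Real.continuous_rpow_const (by linarith)).continuousAt).mul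
    ((Real.continuous_rpow_const (by linarith)).comp
      (continuous_const.sub continuous_id)).continuousAt).mul
    (hasDerivAt_f21 hb hbc hx).continuousAt

end F21

section QuadraticTransformation

-- Both terms have derivative `(2/3) z^(-1/3) (1-z)^(-1/3)` on `(0, 1/2)`: the factor `4^(-2/3)`
-- absorbs the `4^(2/3)` coming from `(4 z (1 - z))^(2/3)`.
noncomputable def quadDefect (z : ℝ) : ℝ :=
  f21Weighted (4/3) (5/3) z - (4 : ℝ) ^ (-(2/3) : ℝ) * f21Weighted (7/6) (5/3) (4 * z * (1 - z))

variable {z : ℝ}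

lemma four_mul_mul_one_sub_mem_Ioo (hz : z ∈ Ioo 0 (1/2)) : 4 * z * (1 - z) ∈ Ioo 0 1 := by
  obtain ⟨h0, h1⟩ := hz
  constructor <;> nlinarith

lemma hasDerivAt_four_mul_mul_one_sub (z : ℝ) :
    HasDerivAt (fun y ↦ 4 * y * (1 - y)) (4 * (1 - 2 * z)) z :=
  (((hasDerivAt_id' z).const_mul 4).mul ((hasDerivAt_id' z).const_sub 1)).congr_deriv (by ring)

lemma hasDerivAt_quadDefect (hz : z ∈ Ioo 0 (1/2)) : HasDerivAt quadDefect 0 z := by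
  obtain ⟨h0, h1⟩ := hz
  have h1z : 0 < 1 - z := by linarith
  have h2z : 0 < 1 - 2 * z := by linarith
  have hL := hasDerivAt_f21Weighted (b := 4/3) (c := 5/3) (by norm_num) (by norm_num)
    ⟨h0, by linarith⟩
  have hM := (hasDerivAt_f21Weighted (b := 7/6) (c := 5/3) (by norm_num) (by norm_num)
    (four_mul_mul_one_sub_mem_Ioo ⟨h0, h1⟩)).comp z (hasDerivAt_four_mul_mul_one_sub z)
  refine (hL.sub (hM.const_mul _)).congr_deriv ?_
  have hPow : (4 * z * (1 - z)) ^ (5/3 - 2 : ℝ)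
      = (4 : ℝ) ^ (-(1/3) : ℝ) * (z ^ (5/3 - 2 : ℝ) * (1 - z) ^ (4/3 - 5/3 : ℝ)) := by
    rw [Real.mul_rpow (by positivity) h1z.le, Real.mul_rpow (by norm_num) h0.le]
    norm_num [mul_assoc]
  have hSqrt : (1 - 4 * z * (1 - z)) ^ (7/6 - 5/3 : ℝ) = (1 - 2 * z)⁻¹ := by
    rw [show 1 - 4 * z * (1 - z) = (1 - 2 * z) ^ (2 : ℝ) by norm_cast; ring,
      ← Real.rpow_mul h2z.le]
    norm_num [Real.rpow_neg_one]
  have hFour : (4 : ℝ) ^ (-(2/3) : ℝ) * (4 : ℝ) ^ (-(1/3) : ℝ) = 4⁻¹ := by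
    rw [← Real.rpow_add (by norm_num)]
    norm_num [Real.rpow_neg_one]
  have hInv : (1 - 2 * z)⁻¹ * (1 - 2 * z) = 1 := inv_mul_cancel₀ h2z.ne'
  rw [hPow, hSqrt]
  set Z := z ^ (5/3 - 2 : ℝ) * (1 - z) ^ (4/3 - 5/3 : ℝ)
  linear_combination (-4 * (2/3) * Z * ((1 - 2 * z)⁻¹ * (1 - 2 * z))) * hFour - (2/3) * Z * hInv

lemma continuousAt_quadDefect (hz : z ∈ Ico 0 (1/2)) : ContinuousAt quadDefect z := by
  obtain ⟨h0, h1⟩ := hz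
  have hP : |4 * z * (1 - z)| < 1 := by
    rw [abs_lt]; constructor <;> nlinarith
  refine (continuousAt_f21Weighted (b := 4/3) (c := 5/3) (by norm_num) (by norm_num)
    (by norm_num) (by norm_num) (abs_lt.mpr ⟨by linarith, by linarith⟩)).sub
    (continuousAt_const.mul ?_)
  exact ContinuousAt.comp (f := fun y ↦ 4 * y * (1 - y))
    (continuousAt_f21Weighted (by norm_num) (by norm_num) (by norm_num) (by norm_num) hP)
    (by fun_prop)

lemma quadDefect_zero : quadDefect 0 = 0 := by
  norm_num [quadDefect, f21Weighted]

lemma quadDefect_eq_zero (hz : z ∈ Ico 0 (1/2)) : quadDefect z = 0 := by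
  rcases hz.1.eq_or_lt with rfl | h0
  · exact quadDefect_zero
  obtain ⟨ξ, -, hξ⟩ := exists_hasDerivAt_eq_slope quadDefect (fun _ ↦ 0) h0
    (fun y hy ↦ (continuousAt_quadDefect ⟨hy.1, hy.2.trans_lt hz.2⟩).continuousWithinAt)
    (fun y hy ↦ hasDerivAt_quadDefect ⟨hy.1, hy.2.trans hz.2⟩)
  rw [quadDefect_zero, eq_comm, div_eq_zero_iff, sub_zero, sub_zero] at hξ
  exact hξ.resolve_right h0.ne'

theorem f21_quadratic_transformation (hz : z ∈ Ioo 0 (1/2)) :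
    f21 (4/3) (5/3) z = (1 - 2 * z) * f21 (7/6) (5/3) (4 * z * (1 - z)) := by
  obtain ⟨h0, h1⟩ := hz
  have h1z : 0 < 1 - z := by linarith
  have h2z : 0 < 1 - 2 * z := by linarith
  have hD := quadDefect_eq_zero ⟨h0.le, h1⟩
  have hPow : (4 * z * (1 - z)) ^ (5/3 - 1 : ℝ)
      = (4 : ℝ) ^ (2/3 : ℝ) * (z ^ (5/3 - 1 : ℝ) * (1 - z) ^ (4/3 + 1 - 5/3 : ℝ)) := by
    rw [Real.mul_rpow (by positivity) h1z.le, Real.mul_rpow (by norm_num) h0.le]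
    norm_num [mul_assoc]
  have hSqrt : (1 - 4 * z * (1 - z)) ^ (7/6 + 1 - 5/3 : ℝ) = 1 - 2 * z := by
    rw [show 1 - 4 * z * (1 - z) = (1 - 2 * z) ^ (2 : ℝ) by norm_cast; ring,
      ← Real.rpow_mul h2z.le]
    norm_num
  have hFour : (4 : ℝ) ^ (-(2/3) : ℝ) * (4 : ℝ) ^ (2/3 : ℝ) = 1 := by
    rw [← Real.rpow_add (by norm_num)]
    norm_num
  have hZ : z ^ (5/3 - 1 : ℝ) * (1 - z) ^ (4/3 + 1 - 5/3 : ℝ) ≠ 0 := by positivity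
  rw [quadDefect, f21Weighted, f21Weighted, hPow, hSqrt] at hD
  apply mul_left_cancel₀ hZ
  linear_combination hD + (z ^ (5/3 - 1 : ℝ) * (1 - z) ^ (4/3 + 1 - 5/3 : ℝ)) * (1 - 2 * z)
    * f21 (7/6) (5/3) (4 * z * (1 - z)) * hFour

end QuadraticTransformation

lemma intervalIntegral_tsum_of_nonneg {f : ℕ → ℝ → ℝ} {a b : ℝ} (hab : a ≤ b)
    (hf : ∀ n, Continuous (f n)) (hf0 : ∀ n, ∀ x ∈ Ioc a b, 0 ≤ f n x)
    (hs : Summable fun n ↦ ∫ x in a..b, f n x) :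
    ∫ x in a..b, ∑' n, f n x = ∑' n, ∫ x in a..b, f n x := by
  simp only [intervalIntegral.integral_of_le hab] at hs ⊢
  refine (integral_tsum_of_summable_integral_norm (fun n ↦ (hf n).integrableOn_Ioc) ?_).symm
  refine hs.congr fun n ↦ setIntegral_congr_fun measurableSet_Ioc fun x hx ↦ ?_
  exact (Real.norm_of_nonneg (hf0 n x hx)).symm

lemma integral_quadratic_pow_mul (k : ℕ) :
    ∫ z in (0 : ℝ)..1/2, (4 * z * (1 - z)) ^ k * (1 - 2 * z) = 1 / (4 * (k + 1)) := by
  have hk : (k : ℝ) + 1 ≠ 0 := by positivity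
  have hderiv (z : ℝ) :
      HasDerivAt (fun y : ℝ ↦ (4 * y * (1 - y)) ^ (k + 1) / (4 * ((k : ℝ) + 1)))
        ((4 * z * (1 - z)) ^ k * (1 - 2 * z)) z := by
    refine (((hasDerivAt_four_mul_mul_one_sub z).pow (k + 1)).div_const _).congr_deriv ?_
    field_simp
    push_cast
    ring
  rw [intervalIntegral.integral_eq_sub_of_hasDerivAt (fun z _ ↦ hderiv z)
    (by apply Continuous.intervalIntegrable; fun_prop)]
  norm_num

lemma sq_f21Coeff_mul_le (k : ℕ) : f21Coeff (7/6) (5/3) k ^ 2 * (k + 1) ≤ 1 := by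
  induction k with
  | zero => simp [f21Coeff_zero]
  | succ m ih =>
    have hm : (0 : ℝ) ≤ m := m.cast_nonneg
    have hcm : 0 < (5/3 : ℝ) + m := by positivity
    have key : (7/6 + (m : ℝ)) ^ 2 * (m + 2) ≤ (5/3 + m) ^ 2 * (m + 1) := by nlinarith
    rw [← mul_le_mul_iff_left₀ (pow_pos hcm 2)]
    calc f21Coeff (7/6) (5/3) (m + 1) ^ 2 * ((m + 1 : ℕ) + 1) * (5/3 + m) ^ 2
        = (f21Coeff (7/6) (5/3) (m + 1) * (5/3 + m)) ^ 2 * (m + 2) := by push_cast; ring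
      _ = f21Coeff (7/6) (5/3) m ^ 2 * ((7/6 + m) ^ 2 * (m + 2)) := by
        rw [f21Coeff_succ (by norm_num)]; ring
      _ ≤ f21Coeff (7/6) (5/3) m ^ 2 * ((5/3 + m) ^ 2 * (m + 1)) := by gcongr
      _ = f21Coeff (7/6) (5/3) m ^ 2 * (m + 1) * (5/3 + m) ^ 2 := by ring
      _ ≤ 1 * (5/3 + m) ^ 2 := by gcongr

lemma summable_f21Coeff_div_succ : Summable fun k : ℕ ↦ f21Coeff (7/6) (5/3) k / (k + 1) := by
  have hp : Summable fun k : ℕ ↦ (((k : ℝ) + 1) ^ (3/2 : ℝ))⁻¹ := by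
    simpa using (summable_nat_add_iff 1).mpr
      (Real.summable_nat_rpow_inv.mpr (by norm_num : (1 : ℝ) < 3/2))
  refine .of_nonneg_of_le (fun k ↦ (div_pos (f21Coeff_pos (by norm_num) (by norm_num) k)
    (by positivity)).le) (fun k ↦ ?_) hp
  have hk : (0 : ℝ) < k + 1 := by positivity
  have hpow : (((k : ℝ) + 1) ^ (3/2 : ℝ)) ^ 2 = ((k : ℝ) + 1) ^ 3 := by
    rw [← Real.rpow_natCast, ← Real.rpow_mul hk.le]; norm_num
  refine le_of_pow_le_pow_left₀ two_ne_zero (by positivity) ?_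
  rw [inv_pow, hpow]
  calc (f21Coeff (7/6) (5/3) k / (k + 1)) ^ 2
      = f21Coeff (7/6) (5/3) k ^ 2 * (k + 1) / ((k : ℝ) + 1) ^ 3 := by field_simp
    _ ≤ 1 / ((k : ℝ) + 1) ^ 3 := by gcongr; exact sq_f21Coeff_mul_le k
    _ = (((k : ℝ) + 1) ^ 3)⁻¹ := one_div _

lemma tsum_f21Coeff_div_succ_mul_half_pow :
    ∑' n : ℕ, f21Coeff (4/3) (5/3) n / (n + 1) * (1/2) ^ n
      = 2 * ∫ z in (0 : ℝ)..1/2, f21 (4/3) (5/3) z := by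
  have hterm (n : ℕ) : ∫ z in (0 : ℝ)..1/2, f21Coeff (4/3) (5/3) n * z ^ n
      = 1/2 * (f21Coeff (4/3) (5/3) n / (n + 1) * (1/2) ^ n) := by
    rw [intervalIntegral.integral_const_mul, integral_pow]
    field_simp
    ring
  have hcoeff (n : ℕ) : |f21Coeff (4/3) (5/3) n / (n + 1)| ≤ 1 := by
    rw [abs_div, abs_of_pos (by positivity : (0 : ℝ) < n + 1)]
    exact div_le_one_of_le₀ ((abs_f21Coeff_le_one (by norm_num) (by norm_num) n).trans
      (by linarith [n.cast_nonneg (α := ℝ)])) (by positivity)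
  have hs := (summable_mul_pow hcoeff (by norm_num : |(1/2 : ℝ)| < 1)).mul_left (1/2)
  unfold f21
  rw [intervalIntegral_tsum_of_nonneg (by norm_num) (fun n ↦ by fun_prop)
    (fun n z hz ↦ (mul_pos (f21Coeff_pos (by norm_num) (by norm_num) n) (pow_pos hz.1 n)).le)
    (by simpa only [hterm] using hs), tsum_congr hterm, tsum_mul_left]
  ring

lemma tsum_f21Coeff_div_succ :
    ∑' k : ℕ, f21Coeff (7/6) (5/3) k / (k + 1)
      = 4 * ∫ z in (0 : ℝ)..1/2, (1 - 2 * z) * f21 (7/6) (5/3) (4 * z * (1 - z)) := by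
  have hterm (k : ℕ) :
      ∫ z in (0 : ℝ)..1/2, f21Coeff (7/6) (5/3) k * ((4 * z * (1 - z)) ^ k * (1 - 2 * z))
        = 1/4 * (f21Coeff (7/6) (5/3) k / (k + 1)) := by
    rw [intervalIntegral.integral_const_mul, integral_quadratic_pow_mul]
    field_simp
  have hintegrand (z : ℝ) : (1 - 2 * z) * f21 (7/6) (5/3) (4 * z * (1 - z))
      = ∑' k, f21Coeff (7/6) (5/3) k * ((4 * z * (1 - z)) ^ k * (1 - 2 * z)) := by
    rw [f21, ← tsum_mul_left]
    exact tsum_congr fun k ↦ by ring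
  have hnonneg (k : ℕ) (z : ℝ) (hz : z ∈ Ioc (0 : ℝ) (1/2)) :
      0 ≤ f21Coeff (7/6) (5/3) k * ((4 * z * (1 - z)) ^ k * (1 - 2 * z)) := by
    obtain ⟨h0, h1⟩ := hz
    have : 0 ≤ 4 * z * (1 - z) := by nlinarith
    exact mul_nonneg (f21Coeff_pos (by norm_num) (by norm_num) k).le
      (mul_nonneg (pow_nonneg this k) (by linarith))
  simp_rw [hintegrand]
  rw [intervalIntegral_tsum_of_nonneg (by norm_num) (fun k ↦ by fun_prop) hnonneg
    (by simpa only [hterm] using summable_f21Coeff_div_succ.mul_left (1/4)),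
    tsum_congr hterm, tsum_mul_left]
  ring

lemma tsum_f21Coeff_div_succ_mul_half_pow_eq :
    ∑' n : ℕ, f21Coeff (4/3) (5/3) n / (n + 1) * (1/2) ^ n
      = 1/2 * ∑' k : ℕ, f21Coeff (7/6) (5/3) k / (k + 1) := by
  have hint : ∫ z in (0 : ℝ)..1/2, f21 (4/3) (5/3) z
      = ∫ z in (0 : ℝ)..1/2, (1 - 2 * z) * f21 (7/6) (5/3) (4 * z * (1 - z)) := by
    simp only [intervalIntegral.integral_of_le (by norm_num : (0 : ℝ) ≤ 1/2),
      integral_Ioc_eq_integral_Ioo]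
    exact setIntegral_congr_fun measurableSet_Ioo fun z hz ↦ f21_quadratic_transformation hz
  rw [tsum_f21Coeff_div_succ_mul_half_pow, tsum_f21Coeff_div_succ, hint]
  ring

/-- `₃F₂(1,1,4/3;2,5/3;1/2) = (1/2)·₃F₂(1,1,7/6;2,5/3;1)`, where the series on
the right converges (since `2 + 5/3 − 1 − 1 − 7/6 = 1/2 > 0`). -/
theorem stmt13 :
    Summable (fun k : ℕ => pochR 1 k * pochR 1 k * pochR (7/6) k /
      (pochR 2 k * pochR (5/3) k * (Nat.factorial k : ℝ)) * (1:ℝ) ^ k) ∧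
    F32R 1 1 (4/3) 2 (5/3) (1/2) = (1/2) * F32R 1 1 (7/6) 2 (5/3) 1 := by
  refine ⟨summable_f21Coeff_div_succ.congr fun k ↦ ?_, ?_⟩
  · rw [F32R_summand_one_one_two, one_pow, mul_one]
  · simpa only [F32R_one_one_two, one_pow, mul_one] using tsum_f21Coeff_div_succ_mul_half_pow_eq
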